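/- arXiv:2010.09904 — 2 statements merged into one kernel-verified Lean document; each statement's English description precedes it below -/
import Mathlib

section
/- The derivative of clog is monotone in the sense that |clog'(x)| is bounded by L₉·log(x)/x² + L₁₀ for suitable constants: there exist a negative constant L₉ and a positive constant L₁₀ suchที that |clog'(x)| ≤ L₉·log(x)/x² + L₁₀ for all x > 0. -/
noncomputable def clog (x₀ x : ℝ) : ℝ :=
  if 0 < x ∧ x ≤ x₀ then -((x - x₀)^2 / x) * Real.log (x / x₀) else 0

/-!
On `(0, x₀)` the derivative is `((x₀² - x²) log (x / x₀) - (x - x₀)²) / x² ≤ 0`, and since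
`log x₀ + 1 ≤ x₀` its absolute value is at most `x₀² (x₀ - log x) / x²`; at `x₀` both one-sided
derivatives vanish, and beyond `x₀` the function is zero. The term `x₀³ / x²` is absorbed into
`log x / x²` through `1 + 2 log x ≤ x²`, which also keeps `log x / x²` bounded.
-/

open Real Set Filter Topology

lemma two_mul_log_le_sq_sub_one {x : ℝ} (hx : 0 < x) : 2 * log x ≤ x ^ 2 - 1 := by
  have h := log_le_sub_one_of_pos (pow_pos hx 2)
  rw [log_pow] at h
  push_cast at h
  exact h

namespace clog

variable {x₀ x : ℝ}

lemma eqOn_Ioc : EqOn (clog x₀) (fun y => -((y - x₀) ^ 2 / y) * log (y / x₀)) (Ioc 0 x₀) :=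
  fun _ hy => if_pos hy

lemma eq_zero_of_le (h : x₀ ≤ x) : clog x₀ x = 0 := by
  unfold clog
  split_ifs with hx
  · simp [le_antisymm hx.2 h]
  · rfl

lemma hasDerivAt_formula (hx : x ≠ 0) (hx₀ : x₀ ≠ 0) :
    HasDerivAt (fun y => -((y - x₀) ^ 2 / y) * log (y / x₀))
      ((x₀ ^ 2 - x ^ 2) / x ^ 2 * log (x / x₀) - (x - x₀) ^ 2 / x ^ 2) x := by
  have hquot : HasDerivAt (fun y => (y - x₀) ^ 2 / y)
      ((2 * (x - x₀) * x - (x - x₀) ^ 2) / x ^ 2) x := by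
    simpa using (((hasDerivAt_id' x).sub_const x₀).fun_pow 2).fun_div (hasDerivAt_id' x) hx
  have hlog : HasDerivAt (fun y => log (y / x₀)) (x⁻¹) x := by
    convert ((hasDerivAt_id' x).div_const x₀).log (div_ne_zero hx hx₀) using 1
    field_simp
  refine (hquot.fun_neg.fun_mul hlog).congr_deriv ?_
  field_simp
  ring

lemma hasDerivAt_of_lt (hx : 0 < x) (hxx₀ : x < x₀) :
    HasDerivAt (clog x₀)
      ((x₀ ^ 2 - x ^ 2) / x ^ 2 * log (x / x₀) - (x - x₀) ^ 2 / x ^ 2) x :=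
  (hasDerivAt_formula hx.ne' (hx.trans hxx₀).ne').congr_of_eventuallyEq <|
    eventually_of_mem (Ioo_mem_nhds hx hxx₀) fun _ hy => eqOn_Ioc (Ioo_subset_Ioc_self hy)

lemma hasDerivAt_self (hx₀ : 0 < x₀) : HasDerivAt (clog x₀) 0 x₀ := by
  have hleft : HasDerivWithinAt (clog x₀) 0 (Iic x₀) x₀ := by
    have h := (hasDerivAt_formula hx₀.ne' hx₀.ne').hasDerivWithinAt (s := Iic x₀)
    simp only [sub_self, div_self hx₀.ne', log_one, mul_zero, ne_eq, OfNat.ofNat_ne_zero,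
      not_false_eq_true, zero_pow, zero_div] at h
    refine h.congr_of_eventuallyEq ?_ (eqOn_Ioc ⟨hx₀, le_rfl⟩)
    filter_upwards [inter_mem_nhdsWithin (Iic x₀) (Ioi_mem_nhds hx₀)] with y hy
    exact eqOn_Ioc ⟨hy.2, hy.1⟩
  have hright : HasDerivWithinAt (clog x₀) 0 (Ici x₀) x₀ :=
    (hasDerivWithinAt_const x₀ (Ici x₀) (0 : ℝ)).congr (fun _ hy => eq_zero_of_le hy)
      (eq_zero_of_le le_rfl)
  simpa [Iic_union_Ici] using hleft.union hright

lemma deriv_of_le (hx₀ : 0 < x₀) (h : x₀ ≤ x) : deriv (clog x₀) x = 0 := by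
  rcases h.eq_or_lt with rfl | hlt
  · exact (hasDerivAt_self hx₀).deriv
  · refine ((hasDerivAt_const x (0 : ℝ)).congr_of_eventuallyEq ?_).deriv
    exact eventually_of_mem (Ioi_mem_nhds hlt) fun _ hy => eq_zero_of_le (le_of_lt hy)

lemma abs_deriv_le_of_lt (hx : 0 < x) (hxx₀ : x < x₀) :
    |deriv (clog x₀) x| ≤ x₀ ^ 2 * (x₀ - log x) / x ^ 2 := by
  have hx₀ : 0 < x₀ := hx.trans hxx₀
  have hlog_ratio : log (x / x₀) = log x - log x₀ := log_div hx.ne' hx₀.ne'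
  have hlog_nonpos : log (x / x₀) ≤ 0 := log_nonpos (by positivity) ((div_le_one hx₀).2 hxx₀.le)
  have hlog_x₀ : log x₀ + 1 ≤ x₀ := by linarith [log_le_sub_one_of_pos hx₀]
  rw [(hasDerivAt_of_lt hx hxx₀).deriv,
    show (x₀ ^ 2 - x ^ 2) / x ^ 2 * log (x / x₀) - (x - x₀) ^ 2 / x ^ 2
      = ((x₀ ^ 2 - x ^ 2) * log (x / x₀) - (x - x₀) ^ 2) / x ^ 2 by ring,
    abs_div, abs_of_pos (by positivity : (0 : ℝ) < x ^ 2)]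
  gcongr
  have hfactor : 0 ≤ x₀ ^ 2 - x ^ 2 := by nlinarith
  rw [abs_of_nonpos (by nlinarith [sq_nonneg (x - x₀)])]
  nlinarith [mul_le_mul_of_nonpos_right (sub_le_self (x₀ ^ 2) (sq_nonneg x)) hlog_nonpos]

lemma abs_deriv_le (hx₀ : 0 < x₀) (hx : 0 < x) :
    |deriv (clog x₀) x| ≤ (x₀ ^ 2 + 2 * x₀ ^ 3) * (1 - log x / x ^ 2) := by
  have hlog := two_mul_log_le_sq_sub_one hx
  have hsq : 0 < x ^ 2 := by positivity
  rcases lt_or_ge x x₀ with hlt | hle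
  · refine (abs_deriv_le_of_lt hx hlt).trans ?_
    rw [one_sub_div hsq.ne', mul_div_assoc', div_le_div_iff_of_pos_right hsq]
    nlinarith [pow_pos hx₀ 2, pow_pos hx₀ 3]
  · rw [deriv_of_le hx₀ hle, abs_zero]
    have hratio : log x / x ^ 2 ≤ 1 := (div_le_one hsq).2 (by linarith)
    exact mul_nonneg (by positivity) (sub_nonneg.2 hratio)

end clog

theorem clog_deriv_bound (x₀ : ℝ) (hx₀ : 0 < x₀) :
    ∃ L₉ : ℝ, L₉ < 0 ∧ ∃ L₁₀ : ℝ, 0 < L₁₀ ∧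
      ∀ x : ℝ, 0 < x → |deriv (clog x₀) x| ≤ L₉ * Real.log x / x^2 + L₁₀ := by
  have hA : 0 < x₀ ^ 2 + 2 * x₀ ^ 3 := by positivity
  refine ⟨-(x₀ ^ 2 + 2 * x₀ ^ 3), neg_neg_of_pos hA, x₀ ^ 2 + 2 * x₀ ^ 3, hA, fun x hx => ?_⟩
  exact (clog.abs_deriv_le hx₀ hx).trans_eq (by ring)
end

section
/- There exist a negative constant L₁₁ and a positive constant L₁₂ such that |clog''(x)| ≤ L₁₁·log(x)/x³ + L₁₂ for all x > 0. -/
open Real Set Filter Topology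

theorem hasDerivAt_ite_le_of_eq_zero {φ φ' : ℝ → ℝ} {a x : ℝ}
    (hφ : x ≤ a → HasDerivAt φ (φ' x) x) (hφa : φ a = 0) (hφ'a : φ' a = 0) :
    HasDerivAt (fun y => if y ≤ a then φ y else 0) (if x ≤ a then φ' x else 0) x := by
  rcases lt_trichotomy x a with hlt | rfl | hgt
  · rw [if_pos hlt.le]
    refine (hφ hlt.le).congr_of_eventuallyEq ?_
    filter_upwards [Iio_mem_nhds hlt] with y (hy : y < a)
    simp [hy.le]
  · rw [if_pos le_rfl, hφ'a]
    have left : HasDerivWithinAt (fun y => if y ≤ x then φ y else 0) 0 (Iic x) x :=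
      (hφ'a ▸ hφ le_rfl).hasDerivWithinAt.congr (fun y hy => if_pos hy) (if_pos le_rfl)
    have right : HasDerivWithinAt (fun y => if y ≤ x then φ y else 0) 0 (Ici x) x := by
      refine (hasDerivAt_const x (0 : ℝ)).hasDerivWithinAt.congr (fun y hy => ?_) (by simp [hφa])
      rcases (mem_Ici.mp hy).eq_or_lt with rfl | h
      · simp [hφa]
      · simp [h.not_ge]
    simpa [Iic_union_Ici] using left.union right
  · rw [if_neg hgt.not_ge]
    refine (hasDerivAt_const x (0 : ℝ)).congr_of_eventuallyEq ?_
    filter_upwards [Ioi_mem_nhds hgt] with y (hy : a < y)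
    simp [hy.not_ge]

theorem add_log_div_pow_three_le_exp (c : ℝ) {x : ℝ} (hx : 0 < x) :
    (c + log x) / x^3 ≤ exp (3 * c) := by
  rcases le_or_gt (c + log x) 0 with hneg | hpos
  · exact (div_nonpos_of_nonpos_of_nonneg hneg (by positivity)).trans (exp_pos _).le
  rw [div_le_iff₀ (by positivity)]
  calc c + log x ≤ exp (3 * (c + log x)) := by linarith [add_one_le_exp (3 * (c + log x))]
    _ = exp (3 * c) * x^3 := by
      rw [mul_add, exp_add, show 3 * log x = log (x^3) by rw [log_pow]; norm_num,
        exp_log (by positivity)]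

theorem hasDerivAt_log_div_const {a x : ℝ} (ha : a ≠ 0) (hx : x ≠ 0) :
    HasDerivAt (fun x => log (x / a)) x⁻¹ x := by
  convert ((hasDerivAt_id' x).div_const a).log (div_ne_zero hx ha) using 1
  field_simp

noncomputable def clogBranch (x₀ y : ℝ) : ℝ := -((y - x₀)^2 / y) * log (y / x₀)

noncomputable def clogBranchDeriv (x₀ y : ℝ) : ℝ :=
  ((x₀^2 - y^2) * log (y / x₀) - (y - x₀)^2) / y^2

noncomputable def clogBranchDeriv2 (x₀ y : ℝ) : ℝ :=
  (-2 * x₀^2 * log (y / x₀) + (x₀ - y) * (y + 3 * x₀)) / y^3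

section
variable {x₀ y : ℝ}

theorem clogBranch_self : clogBranch x₀ x₀ = 0 := by simp [clogBranch]

theorem clogBranchDeriv_self : clogBranchDeriv x₀ x₀ = 0 := by simp [clogBranchDeriv]

theorem clogBranchDeriv2_self : clogBranchDeriv2 x₀ x₀ = 0 := by simp [clogBranchDeriv2]

theorem hasDerivAt_clogBranch (hx₀ : x₀ ≠ 0) (hy : y ≠ 0) :
    HasDerivAt (clogBranch x₀) (clogBranchDeriv x₀ y) y := by
  have hsq : HasDerivAt (fun y => (y - x₀)^2) (2 * (y - x₀)) y := by
    simpa using ((hasDerivAt_id y).sub_const x₀).fun_pow 2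
  refine (((hsq.fun_div (hasDerivAt_id' y) hy).neg).mul
    (hasDerivAt_log_div_const hx₀ hy)).congr_deriv ?_
  simp only [clogBranchDeriv, Pi.neg_apply]
  field_simp
  ring

theorem hasDerivAt_clogBranchDeriv (hx₀ : x₀ ≠ 0) (hy : y ≠ 0) :
    HasDerivAt (clogBranchDeriv x₀) (clogBranchDeriv2 x₀ y) y := by
  have hnum : HasDerivAt (fun y => (x₀^2 - y^2) * log (y / x₀) - (y - x₀)^2)
      ((-(2 * y)) * log (y / x₀) + (x₀^2 - y^2) * y⁻¹ - 2 * (y - x₀)) y := by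
    have h1 : HasDerivAt (fun y => x₀^2 - y^2) (-(2 * y)) y := by
      simpa using ((hasDerivAt_id y).fun_pow 2).const_sub (x₀^2)
    have h2 : HasDerivAt (fun y => (y - x₀)^2) (2 * (y - x₀)) y := by
      simpa using ((hasDerivAt_id y).sub_const x₀).fun_pow 2
    exact (h1.mul (hasDerivAt_log_div_const hx₀ hy)).sub h2
  have hden : HasDerivAt (fun y : ℝ => y^2) (2 * y) y := by
    simpa using (hasDerivAt_id y).fun_pow 2
  refine (hnum.fun_div hden (pow_ne_zero 2 hy)).congr_deriv ?_
  simp only [clogBranchDeriv2]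
  field_simp
  ring

theorem clog_eventuallyEq (hy : 0 < y) :
    clog x₀ =ᶠ[𝓝 y] fun z => if z ≤ x₀ then clogBranch x₀ z else 0 := by
  filter_upwards [Ioi_mem_nhds hy] with z (hz : 0 < z)
  simp [clog, clogBranch, hz]

theorem deriv_deriv_clog (hx₀ : x₀ ≠ 0) (hy : 0 < y) :
    deriv (deriv (clog x₀)) y = if y ≤ x₀ then clogBranchDeriv2 x₀ y else 0 := by
  have hderiv : deriv (clog x₀) =ᶠ[𝓝 y] fun z => if z ≤ x₀ then clogBranchDeriv x₀ z else 0 := by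
    filter_upwards [Ioi_mem_nhds hy] with z (hz : 0 < z)
    rw [(clog_eventuallyEq hz).deriv_eq]
    exact (hasDerivAt_ite_le_of_eq_zero (fun _ => hasDerivAt_clogBranch hx₀ hz.ne')
      clogBranch_self clogBranchDeriv_self).deriv
  rw [hderiv.deriv_eq]
  exact (hasDerivAt_ite_le_of_eq_zero (fun _ => hasDerivAt_clogBranchDeriv hx₀ hy.ne')
    clogBranchDeriv_self clogBranchDeriv2_self).deriv

theorem abs_clogBranchDeriv2_le (hy : 0 < y) (hyx₀ : y ≤ x₀) :
    |clogBranchDeriv2 x₀ y| ≤ (2 * x₀^2 * log x₀ + 3 * x₀^2 - 2 * x₀^2 * log y) / y^3 := by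
  have hx₀ : 0 < x₀ := hy.trans_le hyx₀
  have hlog : log (y / x₀) ≤ 0 := log_nonpos (by positivity) ((div_le_one hx₀).mpr hyx₀)
  have hnonneg : 0 ≤ clogBranchDeriv2 x₀ y := by
    unfold clogBranchDeriv2
    exact div_nonneg (by nlinarith) (by positivity)
  rw [abs_of_nonneg hnonneg, clogBranchDeriv2, log_div hy.ne' hx₀.ne']
  gcongr ?_ / _
  nlinarith

end

theorem clog_second_deriv_bound (x₀ : ℝ) (hx₀ : 0 < x₀) :
    ∃ L₁₁ : ℝ, L₁₁ < 0 ∧ ∃ L₁₂ : ℝ, 0 < L₁₂ ∧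
      ∀ x : ℝ, 0 < x →
        |deriv (deriv (clog x₀)) x| ≤ L₁₁ * Real.log x / x^3 + L₁₂ := by
  set A := 2 * x₀^2 + 1
  set c := 2 * x₀^2 * log x₀ + 3 * x₀^2
  refine ⟨-A, by linarith [sq_nonneg x₀], A + exp (3 * c), by positivity, fun x hx => ?_⟩
  rw [deriv_deriv_clog hx₀.ne' hx]
  split_ifs with hxx₀
  · calc |clogBranchDeriv2 x₀ x| ≤ (c - 2 * x₀^2 * log x) / x^3 := abs_clogBranchDeriv2_le hx hxx₀
      _ = -A * log x / x^3 + (c + log x) / x^3 := by ring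
      _ ≤ -A * log x / x^3 + (A + exp (3 * c)) := by
        linarith [add_log_div_pow_three_le_exp c hx, sq_nonneg x₀]
  · have hlog : log x / x^3 ≤ 1 := by simpa using add_log_div_pow_three_le_exp 0 hx
    have hA : 0 ≤ A * (1 - log x / x^3) := mul_nonneg (by positivity) (sub_nonneg.mpr hlog)
    rw [abs_zero]
    calc (0 : ℝ) ≤ A * (1 - log x / x^3) + exp (3 * c) := add_nonneg hA (exp_pos _).le
      _ = -A * log x / x^3 + (A + exp (3 * c)) := by ring
end
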